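/- Let β ≥ 1, L_b ≥ 0, and let b : ℝ → ℝ be a C¹ function with b(t) ≥ β for all t and |b(t₁) − b(t₂)| ≤ L_b|t₁ − t₂|. Define C(t) = B̄₁ ∩ S(t) where B̄₁ ⊆ ℝ² is the closed ball of radius 1 centered at (−1.5, 0) and S(t) = {x ∈ ℝ² : x₁² + x₂²/b(t)² ≥ 1}. Then the set-valued map t ↦ C(t) is Lipschitz continuous with respect to the Hausdorff distance with constant 4L_b/(3β³): d_H(C(t), C(s)) ≤ (4L_b/(3β³))|t − s| for all t, s ∈ ℝ. -/

import Mathlib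

/-!
If `x ∈ C(t)` is not in `C(s)`, it lies strictly inside the ellipse bounding `S(s)`; move it
horizontally to the left onto that ellipse, to `(-a, x₂)` with `a² = 1 - x₂²/b(s)²`. Because `x`
is in the ball and outside the ellipse bounding `S(t)`, whose semi-axes are at least `1`, one has
`x₁ ∈ (-1, -3/4]` and `x₂² ≤ 3/4`. Hence `a - x₁ ≥ 3/2`, and
`(a + x₁)(a - x₁) = a² - x₁² ≤ x₂² (1/b(t)² - 1/b(s)²)` bounds the displacement `a + x₁` by
`(1/b(t)² - 1/b(s)²)/2`. Finally `c ↦ 1/c²` is `2/β³`-Lipschitz on `[β, ∞)`.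
-/

noncomputable section
open Metric Set

/-- The point of ℝ² with given coordinates. -/
def pt2 (a c : ℝ) : EuclideanSpace ℝ (Fin 2) := (WithLp.equiv 2 _).symm ![a, c]

@[simp]
theorem pt2_apply_zero (a c : ℝ) : pt2 a c 0 = a := rfl

@[simp]
theorem pt2_apply_one (a c : ℝ) : pt2 a c 1 = c := rfl

theorem dist_pt2 (x : EuclideanSpace ℝ (Fin 2)) (a c : ℝ) :
    dist x (pt2 a c) = √((x 0 - a) ^ 2 + (x 1 - c) ^ 2) := by
  simp [EuclideanSpace.dist_eq, Fin.sum_univ_two, Real.dist_eq, sq_abs]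

def ellipseExterior (c : ℝ) : Set (EuclideanSpace ℝ (Fin 2)) :=
  {x | 1 ≤ x 0 ^ 2 + x 1 ^ 2 / c ^ 2}

theorem hausdorffDist_le_mul_abs_sub {X : Type*} [PseudoMetricSpace X] {C : ℝ → Set X} {K : ℝ}
    (hK : 0 ≤ K) (h : ∀ t s, ∀ x ∈ C t, ∃ y ∈ C s, dist x y ≤ K * |t - s|) (t s : ℝ) :
    hausdorffDist (C t) (C s) ≤ K * |t - s| :=
  hausdorffDist_le_of_mem_dist (by positivity) (h t s) fun x hx ↦ by
    simpa only [dist_comm x, abs_sub_comm s t] using h s t x hx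

theorem abs_inv_sq_sub_inv_sq_le {β p q : ℝ} (hβ : 0 < β) (hp : β ≤ p) (hq : β ≤ q) :
    |(p ^ 2)⁻¹ - (q ^ 2)⁻¹| ≤ 2 * |p - q| / β ^ 3 := by
  have hp₀ : 0 < p := hβ.trans_le hp
  have hq₀ : 0 < q := hβ.trans_le hq
  have hfactor : (p ^ 2)⁻¹ - (q ^ 2)⁻¹ = (q - p) * ((p * q ^ 2)⁻¹ + (q * p ^ 2)⁻¹) := by
    field_simp
    ring
  have hle : ∀ {c d : ℝ}, β ≤ c → β ≤ d → β ^ 3 ≤ c * d ^ 2 := fun hc hd ↦ by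
    rw [show β ^ 3 = β * β ^ 2 by ring]
    exact mul_le_mul hc (pow_le_pow_left₀ hβ.le hd 2) (by positivity) (hβ.le.trans hc)
  have hsum : 0 < (p * q ^ 2)⁻¹ + (q * p ^ 2)⁻¹ := by positivity
  rw [hfactor, abs_mul, abs_sub_comm, abs_of_pos hsum]
  calc |p - q| * ((p * q ^ 2)⁻¹ + (q * p ^ 2)⁻¹) ≤ |p - q| * ((β ^ 3)⁻¹ + (β ^ 3)⁻¹) := by
        gcongr
        exacts [hle hp hq, hle hq hp]
    _ = 2 * |p - q| / β ^ 3 := by ring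

/-- `P`, `Q`, `u` stand for `1/b(t)²`, `1/b(s)²`, `x₂²`. -/
theorem horizontal_shift_bounds {x₀ u P Q a : ℝ} (hP : P ≤ 1) (hQ : 0 ≤ Q) (hu : 0 ≤ u)
    (hball : (x₀ + 3 / 2) ^ 2 + u ≤ 1) (hout : 1 ≤ x₀ ^ 2 + u * P) (hin : x₀ ^ 2 + u * Q < 1)
    (ha : 0 ≤ a) (ha2 : a ^ 2 = 1 - u * Q) :
    (3 / 2 - a) ^ 2 + u ≤ 1 ∧ 0 ≤ x₀ + a ∧ x₀ + a ≤ (P - Q) / 2 := by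
  have hx_sq : x₀ ^ 2 < 1 := by nlinarith
  have hu_lb : 1 - x₀ ^ 2 ≤ u := by nlinarith
  have hx_ub : x₀ ≤ -3 / 4 := by nlinarith
  have hx_lb : -1 < x₀ := by nlinarith
  have hu_ub : u ≤ 3 / 4 := by nlinarith
  have ha_lb : -x₀ < a := by nlinarith
  have ha_ub : a ≤ 1 := by nlinarith
  have hPQ : 0 ≤ P - Q := by nlinarith
  refine ⟨by nlinarith, by linarith, ?_⟩
  have hdiff : (x₀ + a) * (a - x₀) ≤ u * (P - Q) := by nlinarith
  nlinarith

theorem exists_mem_closedBall_inter_ellipseExterior_dist_le {p q : ℝ} (hp : 1 ≤ p)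
    {x : EuclideanSpace ℝ (Fin 2)} (hx : x ∈ closedBall (pt2 (-1.5) 0) 1 ∩ ellipseExterior p) :
    ∃ y ∈ closedBall (pt2 (-1.5) 0) 1 ∩ ellipseExterior q,
      dist x y ≤ |(p ^ 2)⁻¹ - (q ^ 2)⁻¹| / 2 := by
  by_cases hxq : x ∈ ellipseExterior q
  · exact ⟨x, ⟨hx.1, hxq⟩, by rw [dist_self]; positivity⟩
  have hball : (x 0 + 3 / 2) ^ 2 + x 1 ^ 2 ≤ 1 := by
    have := mem_closedBall.mp hx.1
    rw [dist_pt2, Real.sqrt_le_one] at this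
    linarith
  have hP : (p ^ 2)⁻¹ ≤ 1 := inv_le_one_of_one_le₀ (one_le_pow₀ hp)
  simp only [ellipseExterior, mem_ofPred_eq, not_le, div_eq_mul_inv] at hx hxq
  set a := √(1 - x 1 ^ 2 * (q ^ 2)⁻¹)
  have ha2 : a ^ 2 = 1 - x 1 ^ 2 * (q ^ 2)⁻¹ := Real.sq_sqrt (by nlinarith)
  obtain ⟨hy_ball, hshift_nonneg, hshift_le⟩ := horizontal_shift_bounds hP (by positivity)
    (sq_nonneg (x 1)) hball hx.2 hxq (Real.sqrt_nonneg _) ha2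
  refine ⟨pt2 (-a) (x 1), ⟨?_, ?_⟩, ?_⟩
  · rw [mem_closedBall, dist_pt2, Real.sqrt_le_one, pt2_apply_zero, pt2_apply_one]
    linarith
  · simp only [ellipseExterior, mem_ofPred_eq, pt2_apply_zero, pt2_apply_one, div_eq_mul_inv]
    linarith [neg_sq a]
  · rw [dist_pt2, sub_self, sub_neg_eq_add, zero_pow two_ne_zero, add_zero,
      Real.sqrt_sq hshift_nonneg]
    exact hshift_le.trans (by gcongr; exact le_abs_self _)

theorem toy_example_moving_set_lipschitz_general
    (β L_b : ℝ) (hβ : 1 ≤ β) (hL_b : 0 ≤ L_b)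
    (b : ℝ → ℝ) (hbβ : ∀ t, β ≤ b t)
    (hbLip : ∀ t₁ t₂, |b t₁ - b t₂| ≤ L_b * |t₁ - t₂|)
    (C : ℝ → Set (EuclideanSpace ℝ (Fin 2)))
    (hC : ∀ t, C t = Metric.closedBall (pt2 (-1.5) 0) 1 ∩
      {x : EuclideanSpace ℝ (Fin 2) | 1 ≤ (x 0) ^ 2 + (x 1) ^ 2 / (b t) ^ 2}) :
    ∀ t s, hausdorffDist (C t) (C s) ≤ (4 * L_b / (3 * β ^ 3)) * |t - s| := by
  have hβ₀ : 0 < β := one_pos.trans_le hβ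
  refine hausdorffDist_le_mul_abs_sub (by positivity) fun t s x hx ↦ ?_
  rw [hC] at hx
  obtain ⟨y, hy, hxy⟩ :=
    exists_mem_closedBall_inter_ellipseExterior_dist_le (q := b s) (hβ.trans (hbβ t)) hx
  refine ⟨y, (hC s).symm ▸ hy, hxy.trans ?_⟩
  calc |(b t ^ 2)⁻¹ - (b s ^ 2)⁻¹| / 2 ≤ 2 * |b t - b s| / β ^ 3 / 2 := by
        gcongr
        exact abs_inv_sq_sub_inv_sq_le hβ₀ (hbβ t) (hbβ s)
    _ ≤ 2 * (L_b * |t - s|) / β ^ 3 / 2 := by gcongr; exact hbLip t s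
    _ = L_b * |t - s| / β ^ 3 := by ring
    _ ≤ 4 / 3 * (L_b * |t - s| / β ^ 3) := le_mul_of_one_le_left (by positivity) (by norm_num)
    _ = 4 * L_b / (3 * β ^ 3) * |t - s| := by ring

/-- Lipschitz continuity (w.r.t. the Hausdorff distance) of the moving set of the toy
example, with explicit Lipschitz constant 4L_b/(3β³). -/
theorem toy_example_moving_set_lipschitz
    (β L_b : ℝ) (hβ : 1 ≤ β) (hL_b : 0 ≤ L_b)
    (b : ℝ → ℝ) (hb : ContDiff ℝ 1 b) (hbβ : ∀ t, β ≤ b t)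
    (hbLip : ∀ t₁ t₂, |b t₁ - b t₂| ≤ L_b * |t₁ - t₂|)
    (C : ℝ → Set (EuclideanSpace ℝ (Fin 2)))
    (hC : ∀ t, C t = Metric.closedBall (pt2 (-1.5) 0) 1 ∩
      {x : EuclideanSpace ℝ (Fin 2) | 1 ≤ (x 0) ^ 2 + (x 1) ^ 2 / (b t) ^ 2}) :
    ∀ t s, hausdorffDist (C t) (C s) ≤ (4 * L_b / (3 * β ^ 3)) * |t - s| :=
  toy_example_moving_set_lipschitz_general β L_b hβ hL_b b hbβ hbLip C hC
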